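/- If the polar complex Γ(C) of a code C ⊆ 2^[n] is shellable, then C has no weak bitflip local obstructions: for every g ∈ (Z/2)^n and every τ ∈ Δ(g·C) with link_τ Δ(g·C) not contractible, one has τ ∈ g·C. -/

import Mathlib

open scoped symmDiff

def polarFace {n : ℕ} (σ : Finset (Fin n)) : Finset (Fin n ⊕ Fin n) :=
  σ.image Sum.inl ∪ σᶜ.image Sum.inr

def polar {n : ℕ} (C : Set (Finset (Fin n))) : Set (Finset (Fin n ⊕ Fin n)) :=
  {F | ∃ σ ∈ C, F ⊆ polarFace σ}

/-- `Δ(C)`: the simplicial complex generated by the codewords of `C`. -/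
def simplicialOfCode {n : ℕ} (C : Set (Finset (Fin n))) : Set (Finset (Fin n)) :=
  {ν | ∃ σ ∈ C, ν ⊆ σ}

def link {V : Type*} [DecidableEq V] (Δ : Set (Finset V)) (T : Finset V) :
    Set (Finset V) :=
  {ν ∈ Δ | ν ∩ T = ∅ ∧ ν ∪ T ∈ Δ}

def IsShelling {V : Type*} [DecidableEq V] {t : ℕ} (k : ℕ) (F : Fin t → Finset V) :
    Prop :=
  (∀ i, (F i).card = k) ∧ Function.Injective F ∧
  ∀ i : Fin t, 0 < (i : ℕ) → ∀ ν ⊆ F i, (∃ j, j < i ∧ ν ⊆ F j) →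
    ∃ μ, μ ⊆ F i ∧ (∃ j, j < i ∧ μ ⊆ F j) ∧ ν ⊆ μ ∧ μ.card = k - 1

def Shellable {V : Type*} [DecidableEq V] (k : ℕ) (Δ : Set (Finset V)) : Prop :=
  ∃ (t : ℕ) (F : Fin t → Finset V), IsShelling k F ∧ Δ = {ν | ∃ i, ν ⊆ F i}

/-- The geometric realization of an abstract simplicial complex on a finite vertex
set `V`, inside `V → ℝ`. -/
def realization {V : Type*} [Fintype V] [DecidableEq V] (Δ : Set (Finset V)) :
    Set (V → ℝ) :=
  {f | (∀ v, 0 ≤ f v) ∧ (∑ v, f v) = 1 ∧ ∃ s ∈ Δ, ∀ v, f v ≠ 0 ↔ v ∈ s}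

/-!
The facets of `Γ(C)` are the sets `polarFace σ`, `σ ∈ C`, and two of them share a ridge exactly
when the codewords differ in one coordinate. So a shelling of `Γ(C)` lists the codewords as
`σ₁, …, σₜ` such that for `j < i` some earlier `σₗ` is obtained from `σᵢ` by flipping one
coordinate in which `σᵢ` and `σⱼ` differ (a *cube shelling*). This property survives the bitflip
`σ ↦ g ∆ σ`, and also passing to the codewords containing `τ` with `τ` removed, which generate the
link of `τ`.

The complex generated by a cube shelling of nonempty sets is contractible: when `ρ` is appended,
either it adds nothing, or the faces it adds are those containing the set `X` of vertices `x`
for which `ρ \ {x}` occurred earlier. Here `X` is nonempty and a proper subset of `ρ`, so the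
step is an elementary collapse in reverse. If `τ` were not a codeword, all sets in the
shelling of its link would be nonempty, and the link would be contractible.
-/

section Realization

variable {V : Type*} [Fintype V] [DecidableEq V]

lemma mem_realization {K : Set (Finset V)} {f : V → ℝ} :
    f ∈ realization K ↔ (∀ v, 0 ≤ f v) ∧ ∑ v, f v = 1 ∧ ({v | f v ≠ 0} : Finset V) ∈ K := by
  refine ⟨fun ⟨h0, h1, s, hs, hsupp⟩ => ⟨h0, h1, ?_⟩,
    fun ⟨h0, h1, hs⟩ => ⟨h0, h1, _, hs, by simp⟩⟩
  convert hs
  ext v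
  simp [hsupp]

lemma realization_mono {K K' : Set (Finset V)} (h : K ⊆ K') :
    realization K ⊆ realization K' :=
  fun _ ⟨h0, h1, s, hs, hsupp⟩ => ⟨h0, h1, s, h hs, hsupp⟩

lemma contractibleSpace_realization_simplex {S : Finset V} (hS : S.Nonempty) :
    ContractibleSpace (realization {ν | ν ⊆ S}) := by
  obtain ⟨z, hz⟩ := hS
  refine Convex.contractibleSpace ?_ ⟨Pi.single z 1, ?_⟩
  · intro f hf g hg a b ha hb hab
    rw [mem_realization] at hf hg ⊢
    refine ⟨fun v => ?_, ?_, fun v hv => ?_⟩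
    · simpa using add_nonneg (mul_nonneg ha (hf.1 v)) (mul_nonneg hb (hg.1 v))
    · simp [Finset.sum_add_distrib, ← Finset.mul_sum, hf.2.1, hg.2.1, hab]
    · by_contra hvS
      have hfv : f v = 0 := by_contra fun h => hvS (hf.2.2 (by simpa using h))
      have hgv : g v = 0 := by_contra fun h => hvS (hg.2.2 (by simpa using h))
      simp [hfv, hgv] at hv
  · rw [mem_realization]
    refine ⟨fun v => ?_, by simp, fun v hv => ?_⟩
    · by_cases hv : v = z <;> simp [hv]
    · by_cases hvz : v = z <;> simp_all [Pi.single_apply]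

section Collapse

variable {K : Set (Finset V)} {X R : Finset V}

noncomputable def collapseShift (X R : Finset V) (v : V) : ℝ :=
  (if v ∈ R \ X then (X.card : ℝ) / (R \ X).card else 0) - if v ∈ X then 1 else 0

lemma sum_collapseShift (h : (R \ X).Nonempty) : ∑ v, collapseShift X R v = 0 := by
  have : ((R \ X).card : ℝ) ≠ 0 := by exact_mod_cast h.card_pos.ne'
  simp only [collapseShift, Finset.sum_sub_distrib, Finset.sum_ite_mem, Finset.univ_inter,
    Finset.sum_const, nsmul_eq_mul, mul_one]
  rw [mul_div_cancel₀ _ this, sub_self]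

lemma add_smul_collapseShift_mem_realization (hX : X.Nonempty) (hXR : X ⊂ R)
    (hR : ∀ ν ⊆ R, ν ∈ K) (hfacet : ∀ ν ∈ K, X ⊆ ν → ν ⊆ R) {f : V → ℝ}
    (hf : f ∈ realization K) {a : ℝ} (ha : 0 ≤ a) (haf : a ≤ X.inf' hX f) :
    f + a • collapseShift X R ∈ realization K := by
  rw [mem_realization] at hf ⊢
  obtain ⟨hf0, hf1, hfK⟩ := hf
  have hfX : ∀ x ∈ X, a ≤ f x := fun x hx => haf.trans (Finset.inf'_le f hx)
  refine ⟨fun v => ?_, ?_, ?_⟩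
  · by_cases hvX : v ∈ X
    · simp [collapseShift, hvX, hfX v hvX]
    · have : 0 ≤ collapseShift X R v := by simp [collapseShift, hvX]; split_ifs <;> positivity
      simpa using add_nonneg (hf0 v) (mul_nonneg ha this)
  · simp [Finset.sum_add_distrib, ← Finset.mul_sum, hf1,
      sum_collapseShift (Finset.sdiff_nonempty.2 (not_subset_of_ssubset hXR))]
  · rcases ha.eq_or_lt with rfl | ha
    · simpa using hfK
    have hsuppR : ({v | f v ≠ 0} : Finset V) ⊆ R :=
      hfacet _ hfK fun x hx => by simpa using (ha.trans_le (hfX x hx)).ne'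
    refine hR _ fun v hv => by_contra fun hvR => ?_
    have hvX : v ∉ X := fun hvX => hvR (hXR.subset hvX)
    have hfv : f v = 0 := by_contra fun h => hvR (hsuppR (by simpa using h))
    simp [collapseShift, hvX, hvR, hfv] at hv

lemma mem_realization_not_superset {f : V → ℝ} :
    f ∈ realization {ν ∈ K | ¬ X ⊆ ν} ↔ f ∈ realization K ∧ ∃ x ∈ X, f x = 0 := by
  simp only [mem_realization, Set.mem_ofPred_eq, Finset.not_subset, Finset.mem_filter,
    Finset.mem_univ, true_and, not_not]
  tauto

lemma inf'_eq_zero_of_mem_realization_not_superset (hX : X.Nonempty) {f : V → ℝ}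
    (hf : f ∈ realization {ν ∈ K | ¬ X ⊆ ν}) : X.inf' hX f = 0 := by
  obtain ⟨⟨hf0, -⟩, x, hx, hfx⟩ := mem_realization_not_superset.1 hf
  exact le_antisymm (hfx ▸ Finset.inf'_le f hx) (Finset.le_inf' hX _ fun y _ => hf0 y)

/-- Moving mass from `X` to `R \ X` until some coordinate in `X` vanishes deformation retracts
`|K|` onto the subcomplex of faces not containing `X`. -/
noncomputable def realizationCollapseHomotopyEquiv (hX : X.Nonempty) (hXR : X ⊂ R)
    (hR : ∀ ν ⊆ R, ν ∈ K) (hfacet : ∀ ν ∈ K, X ⊆ ν → ν ⊆ R) :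
    ContinuousMap.HomotopyEquiv (realization K) (realization {ν ∈ K | ¬ X ⊆ ν}) := by
  set c : (V → ℝ) → ℝ := fun f => X.inf' hX f
  have hc0 : ∀ f ∈ realization K, 0 ≤ c f :=
    fun f hf => Finset.le_inf' hX _ fun y _ => hf.1 y
  have hpush : ∀ f ∈ realization K, ∀ a, 0 ≤ a → a ≤ c f →
      f + a • collapseShift X R ∈ realization K :=
    fun f hf a ha haf => add_smul_collapseShift_mem_realization hX hXR hR hfacet hf ha haf
  have hretract : ∀ f ∈ realization K,
      f + c f • collapseShift X R ∈ realization {ν ∈ K | ¬ X ⊆ ν} := by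
    intro f hf
    obtain ⟨x, hx, hfx⟩ := Finset.exists_mem_eq_inf' hX f
    refine mem_realization_not_superset.2 ⟨hpush f hf _ (hc0 f hf) le_rfl, x, hx, ?_⟩
    simp [collapseShift, hx, c, hfx]
  have hhomotopy : ∀ s : unitInterval, ∀ f ∈ realization K,
      f + ((1 - s) * c f) • collapseShift X R ∈ realization K := fun s f hf =>
    hpush f hf _ (mul_nonneg (sub_nonneg.2 s.2.2) (hc0 f hf))
      (mul_le_of_le_one_left (hc0 f hf) (by linarith [s.2.1]))
  refine
    { toFun := ⟨fun f => ⟨_, hretract f.1 f.2⟩, by fun_prop⟩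
      invFun := ⟨fun f => ⟨f, realization_mono (fun _ h => h.1) f.2⟩, by fun_prop⟩
      left_inv := ⟨{ toFun := fun p => ⟨_, hhomotopy p.1 p.2 p.2.2⟩
                     continuous_toFun := by fun_prop
                     map_zero_left := fun f => by simp
                     map_one_left := fun f => by simp }⟩
      right_inv := ?_ }
  convert ContinuousMap.Homotopic.refl _
  ext f v
  simp [inf'_eq_zero_of_mem_realization_not_superset hX f.2, c]

end Collapse

end Realization

namespace Finset

variable {α : Type*} [DecidableEq α]

lemma symmDiff_singleton_of_mem {A : Finset α} {x : α} (h : x ∈ A) : A ∆ {x} = A.erase x := by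
  ext y
  by_cases hy : y = x <;> simp [mem_symmDiff, hy, h]

lemma symmDiff_singleton_of_notMem {A : Finset α} {x : α} (h : x ∉ A) :
    A ∆ {x} = insert x A := by
  ext y
  by_cases hy : y = x <;> simp [mem_symmDiff, hy, h]

end Finset

/-- The shelling condition for `Γ(C)`, read on the codewords `ρ i` listed in shelling order. -/
def IsCubeShelling {ι α : Type*} [LinearOrder ι] [DecidableEq α] (ρ : ι → Finset α)
    (s : Finset ι) : Prop :=
  ∀ i ∈ s, ∀ j ∈ s, j < i → ∃ x ∈ ρ i ∆ ρ j, ∃ l ∈ s, l < i ∧ ρ l = ρ i ∆ {x}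

namespace IsCubeShelling

variable {ι α : Type*} [LinearOrder ι] [DecidableEq α] {ρ : ι → Finset α} {s : Finset ι}

lemma ne (h : IsCubeShelling ρ s) {i j : ι} (hi : i ∈ s) (hj : j ∈ s) (hji : j < i) :
    ρ j ≠ ρ i := by
  intro hρ
  obtain ⟨x, hx, -⟩ := h i hi j hj hji
  simp [hρ] at hx

lemma of_subset (h : IsCubeShelling ρ s) {t : Finset ι} (hts : t ⊆ s)
    (hdown : ∀ i ∈ t, ∀ l ∈ s, l < i → l ∈ t) : IsCubeShelling ρ t := by
  intro i hi j hj hji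
  obtain ⟨x, hx, l, hl, hli, hρl⟩ := h i (hts hi) j (hts hj) hji
  exact ⟨x, hx, l, hdown i hi l hl hli, hli, hρl⟩

lemma symmDiff_left (h : IsCubeShelling ρ s) (g : Finset α) :
    IsCubeShelling (fun i => g ∆ ρ i) s := by
  intro i hi j hj hji
  obtain ⟨x, hx, l, hl, hli, hρl⟩ := h i hi j hj hji
  refine ⟨x, ?_, l, hl, hli, by simp only [hρl, symmDiff_assoc]⟩
  rwa [symmDiff_symmDiff_symmDiff_comm, symmDiff_self, bot_symmDiff]

/-- If all facets of `ρ i` occurred before it, then so would all facets of the last of them to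
occur; this descends to the empty set. -/
lemma exists_forall_erase_ne (h : IsCubeShelling ρ s) (hne : ∀ i ∈ s, (ρ i).Nonempty)
    {i : ι} (hi : i ∈ s) : ∃ x ∈ ρ i, ∀ l ∈ s, l < i → ρ l ≠ (ρ i).erase x := by
  induction hn : (ρ i).card using Nat.strong_induction_on generalizing i with
  | _ n ih =>
  by_contra! hcoat
  set S := ρ i
  set L := s.filter fun l => l < i ∧ ∃ x ∈ S, ρ l = S.erase x
  have hL : L.Nonempty := by
    obtain ⟨x, hx⟩ := hne i hi
    obtain ⟨l, hl, hli, hρl⟩ := hcoat x hx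
    exact ⟨l, Finset.mem_filter.2 ⟨hl, hli, x, hx, hρl⟩⟩
  obtain ⟨hk, hki, x₀, hx₀, hρk⟩ := Finset.mem_filter.1 (L.max'_mem hL)
  set k := L.max' hL
  have hcard : (ρ k).card < n := by
    rw [hρk, Finset.card_erase_of_mem hx₀, ← hn]
    exact Nat.sub_lt (Finset.card_pos.2 (hne i hi)) one_pos
  obtain ⟨x, hx, hxk⟩ := ih _ hcard hk rfl
  rw [hρk] at hx hxk
  obtain ⟨hxx₀, hxS⟩ := Finset.mem_erase.1 hx
  obtain ⟨m, hm, hmi, hρm⟩ := hcoat x hxS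
  have hmk : m < k := by
    refine lt_of_le_of_ne (L.le_max' m (Finset.mem_filter.2 ⟨hm, hmi, x, hxS, hρm⟩)) ?_
    rintro rfl
    exact hxx₀ ((Finset.erase_inj S hxS).1 (hρm.symm.trans hρk))
  obtain ⟨y, hy, l, hl, hlk, hρl⟩ := h k hk m hm hmk
  rw [hρk, hρm] at hy
  rw [hρk] at hρl
  have hy' : y = x₀ ∨ y = x := by
    simp only [Finset.mem_symmDiff, Finset.mem_erase] at hy
    tauto
  rcases hy' with rfl | rfl
  · rw [Finset.symmDiff_singleton_of_notMem (Finset.notMem_erase y S),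
      Finset.insert_erase hx₀] at hρl
    exact h.ne hi hl (hlk.trans hki) hρl
  · exact hxk l hl hlk (hρl.trans (Finset.symmDiff_singleton_of_mem hx))

/-- Appending `ρ a` to a shelling is an elementary collapse in reverse: the faces of `ρ a`
that are new are exactly those containing the free face `X`. -/
lemma exists_free_face {a : ι} (h : IsCubeShelling ρ (insert a s)) (hlt : ∀ i ∈ s, i < a)
    (hne : ∀ i ∈ insert a s, (ρ i).Nonempty) (hs : s.Nonempty) (hnew : ∀ j ∈ s, ¬ ρ a ⊆ ρ j) :
    ∃ X ⊂ ρ a, X.Nonempty ∧ (∀ j ∈ s, ¬ X ⊆ ρ j) ∧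
      ∀ ν ⊆ ρ a, ¬ X ⊆ ν → ∃ j ∈ s, ν ⊆ ρ j := by
  set X := (ρ a).filter fun x => ∃ l ∈ s, ρ l = (ρ a).erase x
  have hold : ∀ l ∈ insert a s, l < a → l ∈ s := fun l hl hla =>
    (Finset.mem_insert.1 hl).resolve_left hla.ne
  have hmissing : ∀ j ∈ s, ∃ x ∈ X, x ∉ ρ j := by
    intro j hj
    obtain ⟨x, hx, l, hl, hla, hρl⟩ :=
      h a (Finset.mem_insert_self a s) j (Finset.mem_insert_of_mem hj) (hlt j hj)
    have hl := hold l hl hla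
    by_cases hxa : x ∈ ρ a
    · refine ⟨x, Finset.mem_filter.2 ⟨hxa, l, hl, ?_⟩, ?_⟩
      · rw [hρl, Finset.symmDiff_singleton_of_mem hxa]
      · simpa [Finset.mem_symmDiff, hxa] using hx
    · refine absurd ?_ (hnew l hl)
      rw [hρl, Finset.symmDiff_singleton_of_notMem hxa]
      exact Finset.subset_insert x _
  refine ⟨X, Finset.filter_ssubset.2 ?_, ?_, fun j hj hXj => ?_, fun ν hν hXν => ?_⟩
  · obtain ⟨x, hx, hxa⟩ := h.exists_forall_erase_ne hne (Finset.mem_insert_self a s)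
    exact ⟨x, hx, fun ⟨l, hl, hρl⟩ => hxa l (Finset.mem_insert_of_mem hl) (hlt l hl) hρl⟩
  · obtain ⟨j, hj⟩ := hs
    obtain ⟨x, hx, -⟩ := hmissing j hj
    exact ⟨x, hx⟩
  · obtain ⟨x, hx, hxj⟩ := hmissing j hj
    exact hxj (hXj hx)
  · obtain ⟨x, hxX, hxν⟩ := Finset.not_subset.1 hXν
    obtain ⟨-, l, hl, hρl⟩ := Finset.mem_filter.1 hxX
    exact ⟨l, hl, hρl ▸ Finset.subset_erase.2 ⟨hν, hxν⟩⟩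

lemma sdiff_filter (h : IsCubeShelling ρ s) (τ : Finset α) :
    IsCubeShelling (fun i => ρ i \ τ) (s.filter (τ ⊆ ρ ·)) := by
  intro i hi j hj hji
  obtain ⟨hi, hτi⟩ := Finset.mem_filter.1 hi
  obtain ⟨hj, hτj⟩ := Finset.mem_filter.1 hj
  obtain ⟨x, hx, l, hl, hli, hρl⟩ := h i hi j hj hji
  have hxτ : x ∉ τ := fun hxτ => by simp [Finset.mem_symmDiff, hτi hxτ, hτj hxτ] at hx
  refine ⟨x, ?_, l, Finset.mem_filter.2 ⟨hl, ?_⟩, hli, ?_⟩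
  · simp only [Finset.mem_symmDiff, Finset.mem_sdiff] at hx ⊢
    tauto
  · rw [hρl]
    intro y hy
    have : y ≠ x := fun hyx => hxτ (hyx ▸ hy)
    simp [Finset.mem_symmDiff, hτi hy, this]
  · ext y
    rcases eq_or_ne y x with rfl | hyx
    · simp [Finset.mem_symmDiff, hρl, hxτ]
    · simp [Finset.mem_symmDiff, hρl, hyx]

end IsCubeShelling

section GeneratedComplex

variable {n : ℕ} {ι : Type*}

@[simp]
lemma mem_simplicialOfCode_image {ρ : ι → Finset (Fin n)} {s : Set ι} {ν : Finset (Fin n)} :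
    ν ∈ simplicialOfCode (ρ '' s) ↔ ∃ i ∈ s, ν ⊆ ρ i := by
  simp [simplicialOfCode]

variable [DecidableEq ι] {ρ : ι → Finset (Fin n)} {s : Finset ι} {a : ι}

lemma simplicialOfCode_image_insert_of_subset {j : ι} (hj : j ∈ s) (haj : ρ a ⊆ ρ j) :
    simplicialOfCode (ρ '' ↑(insert a s)) = simplicialOfCode (ρ '' s) := by
  ext ν
  simp only [mem_simplicialOfCode_image, Finset.coe_insert, Set.mem_insert_iff,
    exists_eq_or_imp, Finset.mem_coe]
  exact ⟨fun h => h.elim (fun hνa => ⟨j, hj, hνa.trans haj⟩) id, Or.inr⟩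

lemma contractibleSpace_realization_image_insert {X : Finset (Fin n)} (hXa : X ⊂ ρ a)
    (hX : X.Nonempty) (hXold : ∀ j ∈ s, ¬ X ⊆ ρ j)
    (hnotX : ∀ ν ⊆ ρ a, ¬ X ⊆ ν → ∃ j ∈ s, ν ⊆ ρ j)
    (hs : ContractibleSpace (realization (simplicialOfCode (ρ '' s)))) :
    ContractibleSpace (realization (simplicialOfCode (ρ '' ↑(insert a s)))) := by
  have hmem : ∀ ν, ν ∈ simplicialOfCode (ρ '' ↑(insert a s)) ↔ ν ⊆ ρ a ∨ ∃ j ∈ s, ν ⊆ ρ j := by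
    simp
  have hold : {ν ∈ simplicialOfCode (ρ '' ↑(insert a s)) | ¬ X ⊆ ν} =
      simplicialOfCode (ρ '' s) := by
    ext ν
    rw [Set.mem_ofPred_eq, hmem, mem_simplicialOfCode_image]
    constructor
    · rintro ⟨hνa | hνold, hXν⟩
      exacts [hnotX ν hνa hXν, hνold]
    · rintro ⟨j, hj, hνj⟩
      exact ⟨Or.inr ⟨j, hj, hνj⟩, fun hXν => hXold j hj (hXν.trans hνj)⟩
  have hfacet : ∀ ν ∈ simplicialOfCode (ρ '' ↑(insert a s)), X ⊆ ν → ν ⊆ ρ a := by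
    intro ν hν hXν
    rcases (hmem ν).1 hν with hνa | ⟨j, hj, hνj⟩
    exacts [hνa, absurd (hXν.trans hνj) (hXold j hj)]
  rw [← hold] at hs
  exact (realizationCollapseHomotopyEquiv hX hXa (fun ν hν => (hmem ν).2 (Or.inl hν))
    hfacet).contractibleSpace

end GeneratedComplex

theorem IsCubeShelling.contractibleSpace_realization {n : ℕ} {ι : Type*} [LinearOrder ι]
    {ρ : ι → Finset (Fin n)} {s : Finset ι} (h : IsCubeShelling ρ s)
    (hne : ∀ i ∈ s, (ρ i).Nonempty) (hs : s.Nonempty) :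
    ContractibleSpace (realization (simplicialOfCode (ρ '' s))) := by
  induction s using Finset.induction_on_max with
  | empty => simp at hs
  | insert a s hlt ih =>
  rcases s.eq_empty_or_nonempty with rfl | hsne
  · have hsimplex : simplicialOfCode (ρ '' ↑({a} : Finset ι)) = {ν | ν ⊆ ρ a} := by
      ext ν; simp [simplicialOfCode]
    rw [insert_empty_eq, hsimplex]
    exact contractibleSpace_realization_simplex (hne a (Finset.mem_singleton_self a))
  have ih := ih (h.of_subset (Finset.subset_insert a s) fun i hi l hl hli =>
      (Finset.mem_insert.1 hl).resolve_left (hli.trans (hlt i hi)).ne)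
    (fun i hi => hne i (Finset.mem_insert_of_mem hi)) hsne
  by_cases hnew : ∃ j ∈ s, ρ a ⊆ ρ j
  · obtain ⟨j, hj, haj⟩ := hnew
    rwa [simplicialOfCode_image_insert_of_subset hj haj]
  push Not at hnew
  obtain ⟨X, hXa, hX, hXold, hnotX⟩ := h.exists_free_face hlt hne hsne hnew
  exact contractibleSpace_realization_image_insert hXa hX hXold hnotX ih

section Polar

variable {n : ℕ}

@[simp]
lemma inl_mem_polarFace {σ : Finset (Fin n)} {x : Fin n} : Sum.inl x ∈ polarFace σ ↔ x ∈ σ := by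
  simp [polarFace]

@[simp]
lemma inr_mem_polarFace {σ : Finset (Fin n)} {x : Fin n} : Sum.inr x ∈ polarFace σ ↔ x ∉ σ := by
  simp [polarFace]

lemma polarFace_injective : Function.Injective (polarFace (n := n)) := fun σ τ h => by
  ext x
  rw [← inl_mem_polarFace, h, inl_mem_polarFace]

lemma polarFace_inter_polarFace (σ τ : Finset (Fin n)) :
    polarFace σ ∩ polarFace τ = (σ ∩ τ).disjSum (σ ∪ τ)ᶜ := by
  ext (x | x) <;> simp

lemma card_polarFace_inter_add_card_symmDiff (σ τ : Finset (Fin n)) :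
    (polarFace σ ∩ polarFace τ).card + (σ ∆ τ).card = n := by
  rw [polarFace_inter_polarFace, Finset.card_disjSum, Finset.card_compl, Fintype.card_fin,
    symmDiff_eq_sup_sdiff_inf, Finset.card_sdiff_of_subset inf_le_sup]
  have hinter := Finset.card_le_card (inf_le_sup : σ ⊓ τ ≤ σ ⊔ τ)
  have hunion := (σ ∪ τ).card_le_univ
  rw [Fintype.card_fin] at hunion
  simp only [Finset.sup_eq_union, Finset.inf_eq_inter] at *
  omega

lemma card_polarFace (σ : Finset (Fin n)) : (polarFace σ).card = n := by
  simpa using card_polarFace_inter_add_card_symmDiff σ σ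

lemma symmDiff_subset_of_polarFace_inter_subset {σ τ τ' : Finset (Fin n)}
    (h : polarFace σ ∩ polarFace τ ⊆ polarFace τ') : σ ∆ τ' ⊆ σ ∆ τ := by
  intro x hx
  by_contra hxτ
  by_cases hxσ : x ∈ σ
  · have := @h (Sum.inl x)
    simp_all [Finset.mem_symmDiff]
  · have := @h (Sum.inr x)
    simp_all [Finset.mem_symmDiff]

lemma Shellable.exists_isCubeShelling {C : Set (Finset (Fin n))}
    (hsh : Shellable n (polar C)) :
    ∃ (t : ℕ) (σ : Fin t → Finset (Fin n)), Set.range σ = C ∧ IsCubeShelling σ Finset.univ := by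
  obtain ⟨t, F, ⟨hcard, hFinj, hshell⟩, hpolar⟩ := hsh
  have hfacet : ∀ i, ∃ σ ∈ C, F i = polarFace σ := by
    intro i
    obtain ⟨σ, hσ, hsub⟩ : F i ∈ polar C := hpolar ▸ ⟨i, subset_rfl⟩
    exact ⟨σ, hσ, Finset.eq_of_subset_of_card_le hsub (by rw [card_polarFace, hcard])⟩
  choose σ hσC hFσ using hfacet
  refine ⟨t, σ, Set.range_subset_iff.2 hσC |>.antisymm fun σ' hσ' => ?_, ?_⟩
  · obtain ⟨i, hsub⟩ : polarFace σ' ∈ {ν | ∃ i, ν ⊆ F i} := hpolar ▸ ⟨σ', hσ', subset_rfl⟩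
    refine ⟨i, polarFace_injective (Finset.eq_of_subset_of_card_le ?_ ?_).symm⟩
    · rwa [← hFσ]
    · rw [← hFσ, hcard, card_polarFace]
  rintro i - j - hji
  obtain ⟨μ, hμi, ⟨l, hli, hμl⟩, hijμ, hμcard⟩ :=
    hshell i (Nat.zero_lt_of_lt hji) _ Finset.inter_subset_left ⟨j, hji, Finset.inter_subset_right⟩
  simp only [hFσ] at hμi hμl hijμ
  have hle : (σ i ∆ σ l).card ≤ 1 := by
    have := card_polarFace_inter_add_card_symmDiff (σ i) (σ l)
    have := Finset.card_le_card (Finset.subset_inter hμi hμl)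
    omega
  have hne : (σ i ∆ σ l).Nonempty := by
    rw [Finset.nonempty_iff_ne_empty, ← Finset.bot_eq_empty, Ne, symmDiff_eq_bot]
    exact fun h => hli.ne' (hFinj (by rw [hFσ, hFσ, h]))
  obtain ⟨x, hx⟩ := Finset.card_eq_one.1 (le_antisymm hle hne.card_pos)
  have hxij : x ∈ σ i ∆ σ j :=
    symmDiff_subset_of_polarFace_inter_subset (hijμ.trans hμl) (hx ▸ Finset.mem_singleton_self x)
  exact ⟨x, hxij, l, Finset.mem_univ l, hli, by rw [← hx, symmDiff_symmDiff_cancel_left]⟩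

end Polar

lemma link_simplicialOfCode_image {n : ℕ} {ι : Type*} (ρ : ι → Finset (Fin n)) (s : Finset ι)
    (τ : Finset (Fin n)) :
    link (simplicialOfCode (ρ '' s)) τ =
      simplicialOfCode ((fun i => ρ i \ τ) '' ↑(s.filter (τ ⊆ ρ ·))) := by
  ext ν
  simp only [link, Set.mem_ofPred_eq, mem_simplicialOfCode_image, Finset.coe_filter,
    Finset.subset_sdiff, Finset.union_subset_iff,
    ← Finset.disjoint_iff_inter_eq_empty]
  constructor
  · rintro ⟨-, hντ, i, hi, hνi, hτi⟩
    exact ⟨i, ⟨hi, hτi⟩, hνi, hντ⟩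
  · rintro ⟨i, ⟨hi, hτi⟩, hνi, hντ⟩
    exact ⟨⟨i, hi, hνi⟩, hντ, i, hi, hνi, hτi⟩

/-- If `Γ(C)` is shellable then `C` has no weak bitflip local obstructions: for every
bitflip `g ∈ (ℤ/2)ⁿ` (identified with its support, acting by symmetric difference)
and every face `τ` of `Δ(g·C)` whose link in `Δ(g·C)` is not contractible, `τ` is a
codeword of `g·C`. -/
theorem shellable_no_weak_bitflip_obstruction {n : ℕ} (C : Set (Finset (Fin n)))
    (hsh : Shellable n (polar C)) (g : Finset (Fin n)) (τ : Finset (Fin n))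
    (hτ : τ ∈ simplicialOfCode ((fun σ => g ∆ σ) '' C))
    (hnc : ¬ ContractibleSpace
      (realization (link (simplicialOfCode ((fun σ => g ∆ σ) '' C)) τ))) :
    τ ∈ (fun σ => g ∆ σ) '' C := by
  obtain ⟨t, σ, rfl, hσ⟩ := hsh.exists_isCubeShelling
  set ρ : Fin t → Finset (Fin n) := fun i => g ∆ σ i
  have hgC : (fun σ => g ∆ σ) '' Set.range σ = ρ '' ↑(Finset.univ : Finset (Fin t)) := by
    rw [Finset.coe_univ, Set.image_univ, ← Set.range_comp]
    rfl
  rw [hgC] at hτ hnc ⊢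
  by_contra hτρ
  refine hnc ?_
  rw [link_simplicialOfCode_image]
  refine ((hσ.symmDiff_left g).sdiff_filter τ).contractibleSpace_realization ?_ ?_
  · intro i hi
    rw [Finset.sdiff_nonempty]
    exact fun hρτ => hτρ ⟨i, by simp, hρτ.antisymm (Finset.mem_filter.1 hi).2⟩
  · obtain ⟨i, -, hτi⟩ := mem_simplicialOfCode_image.1 hτ
    exact ⟨i, Finset.mem_filter.2 ⟨Finset.mem_univ i, hτi⟩⟩
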